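/- arXiv:0906.0916 — 4 statements merged into one kernel-verified Lean document; each statement's English description precedes it below -/
import Mathlib

section
/- Let n ≥ 2 and for each t ≥ 0 let a₁(t), ..., aₙ(t) be complex numbers with a₁(t) real positive. Define C_k(t) = ∑_{j=1}^{n-k} j·a_j(t)·conj(a_{j+k}(t)) for 0 ≤ k ≤ n-1. Suppose C_k(t) = C_k(0) is constant in t for 1 ≤ k ≤ n-1, C₀(t) = C₀(0) + 2t, and |a_j(t)| ≤ j·a₁(t) for all j and t. Then for every k with 2 ≤ k ≤ n, the function t ↦ conj(a_k(t))·a₁(t) is bounded on [0,∞). -/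
open Complex Finset Filter ComplexConjugate

theorem stmt_1 (n : ℕ) (hn : 2 ≤ n) (a : ℕ → ℝ → ℂ)
    (C : ℕ → ℝ → ℂ)
    (hC : ∀ k, k ≤ n - 1 → ∀ t, C k t =
      ∑ j ∈ Finset.Icc 1 (n - k), (j : ℂ) * a j t * conj (a (j + k) t))
    (ha1 : ∀ t, 0 ≤ t → (a 1 t).im = 0 ∧ 0 < (a 1 t).re)
    (hconst : ∀ k, 1 ≤ k → k ≤ n - 1 → ∀ t, 0 ≤ t → C k t = C k 0)
    (hC0 : ∀ t, 0 ≤ t → C 0 t = C 0 0 + 2 * t)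
    (hbd : ∀ j, 1 ≤ j → j ≤ n → ∀ t, 0 ≤ t →
      ‖a j t‖ ≤ j * (a 1 t).re) :
    ∀ k, 2 ≤ k → k ≤ n →
      ∃ B : ℝ, ∀ t, 0 ≤ t → ‖conj (a k t) * a 1 t‖ ≤ B := by
  have habs1 : ∀ t, 0 ≤ t → ‖a 1 t‖ = (a 1 t).re := by
    intro t ht
    have h1 := (ha1 t ht).1
    have h2 := (ha1 t ht).2
    rw [Complex.norm_def, Complex.normSq_apply, h1, mul_zero, add_zero,
      Real.sqrt_mul_self h2.le]
  have key : ∀ m k, k + m = n + 1 → 2 ≤ k →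
      ∃ B : ℝ, ∀ i, k ≤ i → i ≤ n → ∀ t, 0 ≤ t →
        ‖conj (a i t) * a 1 t‖ ≤ B := by
    intro m
    induction m with
    | zero =>
        intro k hk _
        exact ⟨0, fun i hi hi' t ht => absurd (hi.trans hi') (by omega)⟩
    | succ m ih =>
        intro k hk hk2
        obtain ⟨B, hB⟩ := ih (k + 1) (by omega) (by omega)
        have hk1 : 1 ≤ k - 1 := by omega
        have hkn : k - 1 ≤ n - 1 := by omega
        have hsum : ∀ t, 0 ≤ t →
            ‖conj (a k t) * a 1 t‖ ≤
              ‖C (k - 1) 0‖ +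
                ∑ j ∈ Finset.Icc 2 (m + 1), (j : ℝ) ^ 2 * B := by
          intro t ht
          have hc := (hC (k - 1) hkn t).symm.trans (hconst (k - 1) hk1 hkn t ht)
          have hnk : n - (k - 1) = m + 1 := by omega
          rw [hnk] at hc
          have hins : Finset.Icc 1 (m + 1) = insert 1 (Finset.Icc 2 (m + 1)) := by
            ext x; simp [Finset.mem_Icc, Finset.mem_insert]; omega
          rw [hins, Finset.sum_insert (by simp)] at hc
          have h1k : 1 + (k - 1) = k := by omega
          rw [h1k] at hc
          have heq : conj (a k t) * a 1 t = C (k - 1) 0 -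
              ∑ j ∈ Finset.Icc 2 (m + 1),
                (j : ℂ) * a j t * conj (a (j + (k - 1)) t) := by
            rw [← hc]; ring
          rw [heq]
          refine (norm_sub_le _ _).trans ?_
          gcongr
          refine (norm_sum_le _ _).trans ?_
          refine Finset.sum_le_sum ?_
          intro j hj
          simp only [Finset.mem_Icc] at hj
          have hjn : j ≤ n := by omega
          have hj1 : 1 ≤ j := by omega
          have hi1 : k + 1 ≤ j + (k - 1) := by omega
          have hi2 : j + (k - 1) ≤ n := by omega
          have hBi := hB (j + (k - 1)) hi1 hi2 t ht
          rw [norm_mul, Complex.norm_conj, habs1 t ht] at hBi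
          have hbj := hbd j hj1 hjn t ht
          have hpos := (ha1 t ht).2
          calc ‖(j : ℂ) * a j t * conj (a (j + (k - 1)) t)‖
              = (j : ℝ) * ‖a j t‖ * ‖a (j + (k - 1)) t‖ := by
                simp [norm_mul]
            _ ≤ (j : ℝ) * ((j : ℝ) * (a 1 t).re) * ‖a (j + (k - 1)) t‖ := by
                have : (0 : ℝ) ≤ (j : ℝ) := by positivity
                have h0 : (0 : ℝ) ≤ ‖a (j + (k - 1)) t‖ := by positivity
                have h3 := mul_le_mul_of_nonneg_right
                  (mul_le_mul_of_nonneg_left hbj this) h0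
                linarith
            _ = (j : ℝ) ^ 2 * (‖a (j + (k - 1)) t‖ * (a 1 t).re) := by ring
            _ ≤ (j : ℝ) ^ 2 * B := by
                have : (0 : ℝ) ≤ (j : ℝ) ^ 2 := by positivity
                nlinarith
        refine ⟨max B (‖C (k - 1) 0‖ +
            ∑ j ∈ Finset.Icc 2 (m + 1), (j : ℝ) ^ 2 * B), ?_⟩
        intro i hi hi' t ht
        rcases eq_or_lt_of_le hi with rfl | hlt
        · exact (hsum t ht).trans (le_max_right _ _)
        · exact (hB i hlt hi' t ht).trans (le_max_left _ _)
  intro k hk2 hkn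
  obtain ⟨B, hB⟩ := key (n + 1 - k) k (by omega) hk2
  exact ⟨B, fun t ht => hB k le_rfl hkn t ht⟩
end

section
/- Let n ≥ 2 and a₁,...,aₙ : [0,∞) → ℂ with a₁ real positive and a₁(t) → ∞. Define M_{k-1}(t) = ∑_{(i₁,...,i_k), i₁+···+i_k ≤ n} i₁·a_{i₁}(t)···a_{i_k}(t)·conj(a_{i₁+···+i_k}(t)) for 1 ≤ k ≤ n (indices in {1,...,n}). Suppose each M_{k-1}(t) = M_{k-1} is constant in t for k ≥ 2, and there is C with |a_j(t)| ≤ C for 2 ≤ j ≤ n. If moreover a_n(t) = conj(M_{n-1})·a₁(t)^{-n} for all t, then by downward induction: for every k with 2 ≤ k ≤ n, lim_{t→∞} a₁(t)^k·a_k(t) = conj(M_{k-1}), and in fact a₁(t)^k·a_k(t) − conj(M_{k-1}) = O(a₁(t)^{-4}). -/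
open Filter Finset ComplexConjugate

set_option maxHeartbeats 1600000 in
theorem stmt_9 (n : ℕ) (hn : 2 ≤ n) (a : ℕ → ℝ → ℂ) (M : ℕ → ℂ) (C : ℝ)
    (ha1 : ∀ t, 0 ≤ t → (a 1 t).im = 0 ∧ 0 < (a 1 t).re)
    (ha1inf : Tendsto (fun t => (a 1 t).re) atTop atTop)
    (hbd : ∀ j, 2 ≤ j → j ≤ n → ∀ t, 0 ≤ t → ‖a j t‖ ≤ C)
    (hmom : ∀ k, ∀ hk : 2 ≤ k, k ≤ n → ∀ t, 0 ≤ t →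
      (∑ i ∈ (Fintype.piFinset fun _ : Fin k => Finset.Icc 1 n).filter
          (fun i => (∑ j, i j) ≤ n),
        ((i ⟨0, by omega⟩ : ℂ) * ∏ j, a (i j) t) * conj (a (∑ j, i j) t))
        = M (k - 1))
    (htop : ∀ t, 0 ≤ t → a n t = conj (M (n - 1)) / a 1 t ^ n) :
    ∀ k, 2 ≤ k → k ≤ n →
      Tendsto (fun t => a 1 t ^ k * a k t) atTop (nhds (conj (M (k - 1)))) ∧
      ∃ B T : ℝ, ∀ t, T ≤ t →
        ‖a 1 t ^ k * a k t - conj (M (k - 1))‖ ≤ B / (a 1 t).re ^ 4 := by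
  classical
  -- basic facts about a 1
  have ha1c : ∀ t, 0 ≤ t → a 1 t = ((a 1 t).re : ℂ) := by
    intro t ht
    exact Complex.ext (Complex.ofReal_re _).symm (by simp [(ha1 t ht).1])
  have habs1 : ∀ t, 0 ≤ t → ‖a 1 t‖ = (a 1 t).re := by
    intro t ht
    conv_lhs => rw [ha1c t ht]
    rw [Complex.norm_real, Real.norm_eq_abs, abs_of_pos (ha1 t ht).2]
  have hconj1 : ∀ t, 0 ≤ t → conj (a 1 t) = a 1 t := by
    intro t ht
    rw [ha1c t ht, Complex.conj_ofReal]
  -- T₀ : beyond this time, 0 ≤ t and 1 ≤ re (a 1 t)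
  obtain ⟨T₁, hT₁⟩ := (ha1inf.eventually_ge_atTop 1).exists_forall_of_atTop
  set T₀ : ℝ := max T₁ 0 with hT₀def
  have hT₀0 : (0:ℝ) ≤ T₀ := le_max_right _ _
  have hT₀ : ∀ t, T₀ ≤ t → 0 ≤ t ∧ 1 ≤ (a 1 t).re := by
    intro t ht
    exact ⟨le_trans hT₀0 ht, hT₁ t (le_trans (le_max_left _ _) ht)⟩
  -- the key identity: isolate the all-ones tuple in the moment sum
  have key : ∀ k, ∀ hk : 2 ≤ k, k ≤ n → ∀ t, 0 ≤ t →
      a 1 t ^ k * conj (a k t)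
        = M (k - 1) - ∑ i ∈ ((Fintype.piFinset fun _ : Fin k => Finset.Icc 1 n).filter
            (fun i => (∑ j, i j) ≤ n)).erase (fun _ => 1),
            ((i ⟨0, by omega⟩ : ℂ) * ∏ j, a (i j) t) * conj (a (∑ j, i j) t) := by
    intro k hk hkn t ht
    have h1mem : (fun _ : Fin k => (1:ℕ)) ∈ (Fintype.piFinset fun _ : Fin k => Finset.Icc 1 n).filter
        (fun i => (∑ j, i j) ≤ n) := by
      rw [Finset.mem_filter, Fintype.mem_piFinset]
      refine ⟨fun j => Finset.mem_Icc.mpr ⟨le_rfl, by omega⟩, ?_⟩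
      simp only [Finset.sum_const, Finset.card_univ, Fintype.card_fin, smul_eq_mul, mul_one]
      omega
    have hM := hmom k hk hkn t ht
    rw [← Finset.add_sum_erase _ _ h1mem] at hM
    have hval : ((((fun _ : Fin k => (1:ℕ)) ⟨0, by omega⟩ : ℕ) : ℂ) *
          ∏ j, a ((fun _ : Fin k => (1:ℕ)) j) t) * conj (a (∑ j, (fun _ : Fin k => (1:ℕ)) j) t)
        = a 1 t ^ k * conj (a k t) := by
      simp [Finset.prod_const, Finset.sum_const, Finset.card_univ]
    rw [hval] at hM
    exact (eq_sub_of_add_eq hM)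
  -- abs version of the key identity
  have keyabs : ∀ k, ∀ hk : 2 ≤ k, k ≤ n → ∀ t, 0 ≤ t →
      ‖a 1 t ^ k * a k t - conj (M (k - 1))‖
        = ‖∑ i ∈ ((Fintype.piFinset fun _ : Fin k => Finset.Icc 1 n).filter
            (fun i => (∑ j, i j) ≤ n)).erase (fun _ => 1),
            ((i ⟨0, by omega⟩ : ℂ) * ∏ j, a (i j) t) * conj (a (∑ j, i j) t)‖ := by
    intro k hk hkn t ht
    have h := key k hk hkn t ht
    have hc : a 1 t ^ k * a k t - conj (M (k - 1))
        = conj (a 1 t ^ k * conj (a k t) - M (k - 1)) := by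
      rw [map_sub, map_mul, map_pow, hconj1 t ht, Complex.conj_conj]
    rw [hc, Complex.norm_conj, h]
    rw [sub_sub_cancel_left]
    exact norm_neg _
  -- tuples other than all-ones have an entry ≥ 2 and total sum ≥ k+1
  have htup : ∀ k, 2 ≤ k → ∀ i : Fin k → ℕ,
      i ∈ ((Fintype.piFinset fun _ : Fin k => Finset.Icc 1 n).filter
          (fun i => (∑ j, i j) ≤ n)).erase (fun _ => 1) →
      (∀ j, 1 ≤ i j ∧ i j ≤ n) ∧ (∑ j, i j) ≤ n ∧ (∃ j₀, 2 ≤ i j₀) ∧ k + 1 ≤ ∑ j, i j := by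
    intro k hk i hi
    rw [Finset.mem_erase, Finset.mem_filter, Fintype.mem_piFinset] at hi
    obtain ⟨hne, hmem, hsle⟩ := hi
    have hrange : ∀ j, 1 ≤ i j ∧ i j ≤ n := fun j => Finset.mem_Icc.mp (hmem j)
    have hj0 : ∃ j₀, 2 ≤ i j₀ := by
      by_contra h
      push_neg at h
      exact hne (funext fun j => by have := (hrange j).1; have := h j; omega)
    obtain ⟨j₀, hj₀⟩ := hj0
    refine ⟨hrange, hsle, ⟨j₀, hj₀⟩, ?_⟩
    have hsplit : i j₀ + ∑ j ∈ Finset.univ.erase j₀, i j = ∑ j, i j :=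
      Finset.add_sum_erase _ _ (Finset.mem_univ j₀)
    have hlow : ∑ j ∈ Finset.univ.erase j₀, (1:ℕ) ≤ ∑ j ∈ Finset.univ.erase j₀, i j :=
      Finset.sum_le_sum (fun j _ => (hrange j).1)
    rw [Finset.sum_const, smul_eq_mul, mul_one, Finset.card_erase_of_mem (Finset.mem_univ j₀),
      Finset.card_univ, Fintype.card_fin] at hlow
    omega
  set C₀ : ℝ := max C 1 with hC₀def
  have hC₀1 : (1:ℝ) ≤ C₀ := le_max_right _ _
  have hC₀0 : (0:ℝ) ≤ C₀ := by linarith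
  -- crude per-factor bound
  have hfac : ∀ t, T₀ ≤ t → ∀ p, 1 ≤ p → p ≤ n →
      ‖a p t‖ ≤ C₀ * (a 1 t).re := by
    intro t ht p hp1 hpn
    obtain ⟨ht0, hr1⟩ := hT₀ t ht
    rcases eq_or_lt_of_le hp1 with h1 | h2
    · rw [← h1, habs1 t ht0]
      nlinarith
    · calc ‖a p t‖ ≤ C := hbd p h2 hpn t ht0
        _ ≤ C₀ * 1 := by rw [mul_one]; exact le_max_left _ _
        _ ≤ C₀ * (a 1 t).re := by nlinarith
  -- base: bound for a n
  have Qn : ∀ t, T₀ ≤ t →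
      ‖a n t‖ ≤ ‖M (n - 1)‖ / (a 1 t).re ^ n := by
    intro t ht
    obtain ⟨ht0, hr1⟩ := hT₀ t ht
    rw [htop t ht0, norm_div, norm_pow, habs1 t ht0, Complex.norm_conj]
  have Qbase : ∀ k, 2 ≤ k → k = n →
      ∃ B : ℝ, 1 ≤ B ∧ ∀ t, T₀ ≤ t → ∀ s, k ≤ s → s ≤ n →
        ‖a s t‖ ≤ B / (a 1 t).re ^ s := by
    intro k hk2 hkn
    refine ⟨max (‖M (n - 1)‖) 1, le_max_right _ _, ?_⟩
    intro t ht s hks hsn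
    have hsn' : s = n := by omega
    subst hsn'
    obtain ⟨ht0, hr1⟩ := hT₀ t ht
    have hrpos : (0:ℝ) < (a 1 t).re ^ s := by positivity
    calc ‖a s t‖ ≤ ‖M (s - 1)‖ / (a 1 t).re ^ s := Qn t ht
      _ ≤ max (‖M (s - 1)‖) 1 / (a 1 t).re ^ s := by
          gcongr
          exact le_max_left _ _
  -- first pass: downward induction, |a s t| ≤ B / r^s for all k ≤ s ≤ n
  have Q : ∀ d k, n ≤ k + d → 2 ≤ k → k ≤ n →
      ∃ B : ℝ, 1 ≤ B ∧ ∀ t, T₀ ≤ t → ∀ s, k ≤ s → s ≤ n →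
        ‖a s t‖ ≤ B / (a 1 t).re ^ s := by
    intro d
    induction d with
    | zero => intro k hkd hk2 hkn; exact Qbase k hk2 (by omega)
    | succ d ih =>
      intro k hkd hk2 hkn
      rcases eq_or_lt_of_le hkn with heq | hlt
      · exact Qbase k hk2 heq
      obtain ⟨B, hB1, hQB⟩ := ih (k + 1) (by omega) (by omega) hlt
      have hB0 : (0:ℝ) ≤ B := by linarith
      set E : Finset (Fin k → ℕ) :=
        ((Fintype.piFinset fun _ : Fin k => Finset.Icc 1 n).filter
          (fun i => (∑ j, i j) ≤ n)).erase (fun _ => 1) with hEdef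
      set K : ℝ := (E.card : ℝ) * ((n : ℝ) * (C₀ ^ k * B)) with hKdef
      have hK0 : (0:ℝ) ≤ K := by positivity
      have hak : ∀ t, T₀ ≤ t →
          ‖a k t‖ ≤ (‖M (k - 1)‖ + K) / (a 1 t).re ^ k := by
        intro t ht
        obtain ⟨ht0, hr1⟩ := hT₀ t ht
        have hr0 : (0:ℝ) < (a 1 t).re := by linarith
        -- per-term bound
        have hterm : ∀ i ∈ E,
            ‖((i ⟨0, by omega⟩ : ℕ) : ℂ) * (∏ j, a (i j) t) *
              conj (a (∑ j, i j) t)‖ ≤ (n : ℝ) * (C₀ ^ k * B) := by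
          intro i hi
          obtain ⟨hrange, hsle, _, hsge⟩ := htup k hk2 i hi
          have h_as : ‖a (∑ j, i j) t‖ ≤ B / (a 1 t).re ^ (∑ j, i j) :=
            hQB t ht _ (by omega) hsle
          have h_prod : ‖∏ j, a (i j) t‖ ≤ (C₀ * (a 1 t).re) ^ k := by
            rw [norm_prod]
            calc ∏ j, ‖a (i j) t‖ ≤ ∏ _j : Fin k, (C₀ * (a 1 t).re) :=
                  Finset.prod_le_prod (fun j _ => norm_nonneg _)
                    (fun j _ => hfac t ht _ (hrange j).1 (hrange j).2)
              _ = (C₀ * (a 1 t).re) ^ k := by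
                  rw [Finset.prod_const, Finset.card_univ, Fintype.card_fin]
          have h_i0 : ((i ⟨0, by omega⟩ : ℕ) : ℝ) ≤ (n : ℝ) := by
            exact_mod_cast (hrange _).2
          have habs_eq : ‖((i ⟨0, by omega⟩ : ℕ) : ℂ) * (∏ j, a (i j) t) *
              conj (a (∑ j, i j) t)‖ = ((i ⟨0, by omega⟩ : ℕ) : ℝ) *
              (‖∏ j, a (i j) t‖ * ‖a (∑ j, i j) t‖) := by
            rw [norm_mul, norm_mul, Complex.norm_natCast, Complex.norm_conj, mul_assoc]
          rw [habs_eq]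
          have hstep1 : ‖∏ j, a (i j) t‖ * ‖a (∑ j, i j) t‖
              ≤ (C₀ * (a 1 t).re) ^ k * (B / (a 1 t).re ^ (∑ j, i j)) :=
            mul_le_mul h_prod h_as (norm_nonneg _) (by positivity)
          have hstep2 : (C₀ * (a 1 t).re) ^ k * (B / (a 1 t).re ^ (∑ j, i j))
              ≤ C₀ ^ k * B := by
            rw [mul_pow, mul_assoc]
            apply mul_le_mul_of_nonneg_left _ (by positivity : (0:ℝ) ≤ C₀ ^ k)
            rw [mul_div_assoc', div_le_iff₀ (by positivity)]
            have hr_pow : (a 1 t).re ^ k ≤ (a 1 t).re ^ (∑ j, i j) :=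
              pow_le_pow_right₀ hr1 (by omega)
            nlinarith
          calc ((i ⟨0, by omega⟩ : ℕ) : ℝ) *
              (‖∏ j, a (i j) t‖ * ‖a (∑ j, i j) t‖)
              ≤ (n : ℝ) * ((C₀ * (a 1 t).re) ^ k * (B / (a 1 t).re ^ (∑ j, i j))) :=
                mul_le_mul h_i0 hstep1 (by positivity) (by positivity)
            _ ≤ (n : ℝ) * (C₀ ^ k * B) :=
                mul_le_mul_of_nonneg_left hstep2 (by positivity)
        have hEsum : ‖∑ i ∈ E,
            ((i ⟨0, by omega⟩ : ℕ) : ℂ) * (∏ j, a (i j) t) * conj (a (∑ j, i j) t)‖ ≤ K := by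
          calc ‖∑ i ∈ E,
              ((i ⟨0, by omega⟩ : ℕ) : ℂ) * (∏ j, a (i j) t) * conj (a (∑ j, i j) t)‖
              ≤ ∑ i ∈ E, 
                ‖((i ⟨0, by omega⟩ : ℕ) : ℂ) * (∏ j, a (i j) t) * conj (a (∑ j, i j) t)‖ :=
                norm_sum_le _ _
            _ ≤ E.card • ((n : ℝ) * (C₀ ^ k * B)) := Finset.sum_le_card_nsmul _ _ _ hterm
            _ = K := by rw [nsmul_eq_mul, hKdef]
        have hKA := keyabs k hk2 hkn t ht0
        have h1 : ‖a 1 t ^ k * a k t‖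
            ≤ ‖M (k - 1)‖ + K := by
          calc ‖a 1 t ^ k * a k t‖
              = ‖(a 1 t ^ k * a k t - conj (M (k - 1))) + conj (M (k - 1))‖ := by
                ring_nf
            _ ≤ ‖a 1 t ^ k * a k t - conj (M (k - 1))‖
                + ‖conj (M (k - 1))‖ := norm_add_le _ _
            _ ≤ K + ‖M (k - 1)‖ := by
                rw [Complex.norm_conj]
                apply add_le_add_left
                rw [hKA]
                exact hEsum
            _ = ‖M (k - 1)‖ + K := by ring
        rw [norm_mul, norm_pow, habs1 t ht0] at h1
        rw [le_div_iff₀ (by positivity)]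
        nlinarith [norm_nonneg (a k t)]
      refine ⟨max B (‖M (k - 1)‖ + K), le_trans hB1 (le_max_left _ _), ?_⟩
      intro t ht s hks hsn
      obtain ⟨ht0, hr1⟩ := hT₀ t ht
      rcases eq_or_lt_of_le hks with hsk | hsk
      · rw [← hsk]
        calc ‖a k t‖ ≤ (‖M (k - 1)‖ + K) / (a 1 t).re ^ k :=
              hak t ht
          _ ≤ max B (‖M (k - 1)‖ + K) / (a 1 t).re ^ k := by
              gcongr
              exact le_max_right _ _
      · calc ‖a s t‖ ≤ B / (a 1 t).re ^ s := hQB t ht s (by omega) hsn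
          _ ≤ max B (‖M (k - 1)‖ + K) / (a 1 t).re ^ s := by
              gcongr
              exact le_max_left _ _
  -- uniform bound for all 2 ≤ s ≤ n
  obtain ⟨B, hB1, hQ2⟩ := Q n 2 (by omega) le_rfl hn
  have hB0 : (0:ℝ) ≤ B := by linarith
  -- second pass: the sharp estimate
  intro k hk hkn
  set E : Finset (Fin k → ℕ) :=
    ((Fintype.piFinset fun _ : Fin k => Finset.Icc 1 n).filter
      (fun i => (∑ j, i j) ≤ n)).erase (fun _ => 1) with hEdef
  set Bk : ℝ := (E.card : ℝ) * ((n : ℝ) * B ^ (k + 1)) with hBkdef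
  have main : ∀ t, T₀ ≤ t →
      ‖a 1 t ^ k * a k t - conj (M (k - 1))‖ ≤ Bk / (a 1 t).re ^ 4 := by
    intro t ht
    obtain ⟨ht0, hr1⟩ := hT₀ t ht
    have hr0 : (0:ℝ) < (a 1 t).re := by linarith
    have hterm : ∀ i ∈ E,
        ‖((i ⟨0, by omega⟩ : ℕ) : ℂ) * (∏ j, a (i j) t) *
          conj (a (∑ j, i j) t)‖ ≤ (n : ℝ) * B ^ (k + 1) / (a 1 t).re ^ 4 := by
      intro i hi
      obtain ⟨hrange, hsle, ⟨j₀, hj₀⟩, hsge⟩ := htup k hk i hi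
      have h_as : ‖a (∑ j, i j) t‖ ≤ B / (a 1 t).re ^ (∑ j, i j) :=
        hQ2 t ht _ (by omega) hsle
      -- weighted per-factor bound
      have hper : ∀ j : Fin k,
          ‖a (i j) t‖ * (a 1 t).re ^ (if i j = 1 then 0 else 4)
            ≤ B * (a 1 t).re ^ (i j) := by
        intro j
        by_cases h1 : i j = 1
        · rw [if_pos h1, pow_zero, mul_one, h1, pow_one, habs1 t ht0]
          nlinarith
        · rw [if_neg h1]
          have h2 : 2 ≤ i j := by have := (hrange j).1; omega
          have hfj : ‖a (i j) t‖ ≤ B / (a 1 t).re ^ (i j) :=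
            hQ2 t ht _ h2 (hrange j).2
          calc ‖a (i j) t‖ * (a 1 t).re ^ 4
              ≤ (B / (a 1 t).re ^ (i j)) * (a 1 t).re ^ 4 := by
                apply mul_le_mul_of_nonneg_right hfj (by positivity)
            _ ≤ B * (a 1 t).re ^ (i j) := by
                rw [div_mul_eq_mul_div, div_le_iff₀ (by positivity)]
                have : (a 1 t).re ^ 4 ≤ (a 1 t).re ^ (i j) * (a 1 t).re ^ (i j) := by
                  rw [← pow_add]
                  exact pow_le_pow_right₀ hr1 (by omega)
                nlinarith
      have hcore : ‖∏ j, a (i j) t‖ * (a 1 t).re ^ 4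
          ≤ B ^ k * (a 1 t).re ^ (∑ j, i j) := by
        have hLR : ∏ j, (‖a (i j) t‖ * (a 1 t).re ^ (if i j = 1 then 0 else 4))
            ≤ ∏ j, (B * (a 1 t).re ^ (i j)) :=
          Finset.prod_le_prod (fun j _ => by positivity) (fun j _ => hper j)
        rw [Finset.prod_mul_distrib, Finset.prod_mul_distrib,
          Finset.prod_pow_eq_pow_sum, Finset.prod_pow_eq_pow_sum,
          Finset.prod_const, Finset.card_univ, Fintype.card_fin] at hLR
        have h4 : 4 ≤ ∑ j, (if i j = 1 then 0 else 4) := by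
          have h40 := Finset.single_le_sum (f := fun j => if i j = 1 then (0:ℕ) else 4)
            (fun j _ => Nat.zero_le _) (Finset.mem_univ j₀)
          simp only [if_neg (show ¬ i j₀ = 1 by omega)] at h40
          exact h40
        have hmono : (a 1 t).re ^ 4 ≤ (a 1 t).re ^ (∑ j, (if i j = 1 then 0 else 4)) :=
          pow_le_pow_right₀ hr1 h4
        calc ‖∏ j, a (i j) t‖ * (a 1 t).re ^ 4
            ≤ ‖∏ j, a (i j) t‖ *
              (a 1 t).re ^ (∑ j, (if i j = 1 then 0 else 4)) := by
              apply mul_le_mul_of_nonneg_left hmono (norm_nonneg _)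
          _ = (∏ j, ‖a (i j) t‖) *
              (a 1 t).re ^ (∑ j, (if i j = 1 then 0 else 4)) := by rw [norm_prod]
          _ ≤ B ^ k * (a 1 t).re ^ (∑ j, i j) := hLR
      have h_i0 : ((i ⟨0, by omega⟩ : ℕ) : ℝ) ≤ (n : ℝ) := by
        exact_mod_cast (hrange _).2
      have habs_eq : ‖((i ⟨0, by omega⟩ : ℕ) : ℂ) * (∏ j, a (i j) t) *
          conj (a (∑ j, i j) t)‖ = ((i ⟨0, by omega⟩ : ℕ) : ℝ) *
          (‖∏ j, a (i j) t‖ * ‖a (∑ j, i j) t‖) := by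
        rw [norm_mul, norm_mul, Complex.norm_natCast, Complex.norm_conj, mul_assoc]
      rw [habs_eq]
      have hinner : ‖∏ j, a (i j) t‖ * ‖a (∑ j, i j) t‖
          ≤ B ^ (k + 1) / (a 1 t).re ^ 4 := by
        calc ‖∏ j, a (i j) t‖ * ‖a (∑ j, i j) t‖
            ≤ ‖∏ j, a (i j) t‖ * (B / (a 1 t).re ^ (∑ j, i j)) := by
              apply mul_le_mul_of_nonneg_left h_as (norm_nonneg _)
          _ ≤ B ^ (k + 1) / (a 1 t).re ^ 4 := by
              rw [mul_div_assoc', div_le_div_iff₀ (by positivity) (by positivity), pow_succ]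
              calc ‖∏ j, a (i j) t‖ * B * (a 1 t).re ^ 4
                  = (‖∏ j, a (i j) t‖ * (a 1 t).re ^ 4) * B := by ring
                _ ≤ (B ^ k * (a 1 t).re ^ (∑ j, i j)) * B :=
                    mul_le_mul_of_nonneg_right hcore hB0
                _ = B ^ k * B * (a 1 t).re ^ (∑ j, i j) := by ring
      calc ((i ⟨0, by omega⟩ : ℕ) : ℝ) *
          (‖∏ j, a (i j) t‖ * ‖a (∑ j, i j) t‖)
          ≤ (n : ℝ) * (B ^ (k + 1) / (a 1 t).re ^ 4) :=
            mul_le_mul h_i0 hinner (by positivity) (by positivity)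
        _ = (n : ℝ) * B ^ (k + 1) / (a 1 t).re ^ 4 := by ring
    rw [keyabs k hk hkn t ht0]
    calc ‖∑ i ∈ E,
        ((i ⟨0, by omega⟩ : ℕ) : ℂ) * (∏ j, a (i j) t) * conj (a (∑ j, i j) t)‖
        ≤ ∑ i ∈ E, 
          ‖((i ⟨0, by omega⟩ : ℕ) : ℂ) * (∏ j, a (i j) t) * conj (a (∑ j, i j) t)‖ :=
          norm_sum_le _ _
      _ ≤ E.card • ((n : ℝ) * B ^ (k + 1) / (a 1 t).re ^ 4) :=
          Finset.sum_le_card_nsmul _ _ _ hterm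
      _ = Bk / (a 1 t).re ^ 4 := by
          rw [nsmul_eq_mul, hBkdef]
          ring
  constructor
  · have hpow : Tendsto (fun t => (a 1 t).re ^ 4) atTop atTop :=
      (tendsto_pow_atTop (by norm_num : (4:ℕ) ≠ 0)).comp ha1inf
    have hg : Tendsto (fun t => Bk / (a 1 t).re ^ 4) atTop (nhds 0) :=
      Tendsto.div_atTop tendsto_const_nhds hpow
    have hsq : Tendsto (fun t => a 1 t ^ k * a k t - conj (M (k - 1))) atTop (nhds 0) := by
      apply squeeze_zero_norm' _ hg
      filter_upwards [eventually_ge_atTop T₀] with t ht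
      exact main t ht
    exact tendsto_sub_nhds_zero_iff.mp hsq
  · exact ⟨Bk, T₀, main⟩
end

section
/- Let n₀ ≥ 2 and let a₁,...,aₙ : [0,∞) → ℂ with a₁ real positive, a₁(t) → ∞, |a_j(t)| ≤ C for j ≥ 2. Suppose for each k with 2 ≤ k ≤ n₀ the exact representation a_k(t) = a₁(t)^{-k}·[conj(M_{k-1}) − T_k(t)] holds, where M_{k-1} = 0 for k ≤ n₀, and T_k(t) is a finite sum of terms of the form i₁·conj(a_{i₁}···a_{i_k})·a_{i₁+···+i_k} with i₁+···+i_k ≥ k+1 and at least one i_j > 1. Suppose also a₁^{n₀+1}·a_j(t) is bounded for all j ≥ n₀+1 (in particular a₁^j a_j bounded for j ≥ n₀+1). Then for every k with 2 ≤ k ≤ n₀, lim_{t→∞} a₁(t)^{n₀+1}·a_k(t) = 0. -/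
open Filter Finset ComplexConjugate

theorem stmt_10 (n n₀ : ℕ) (hn₀ : 2 ≤ n₀) (hn₀n : n₀ ≤ n)
    (a : ℕ → ℝ → ℂ) (M : ℕ → ℂ) (C : ℝ)
    (ha1 : ∀ t, 0 ≤ t → (a 1 t).im = 0 ∧ 0 < (a 1 t).re)
    (ha1inf : Tendsto (fun t => (a 1 t).re) atTop atTop)
    (hbd : ∀ j, 2 ≤ j → j ≤ n → ∀ t, 0 ≤ t → ‖a j t‖ ≤ C)
    (hMzero : ∀ k, 2 ≤ k → k ≤ n₀ → M (k - 1) = 0)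
    (hrep : ∀ k, ∀ hk : 2 ≤ k, k ≤ n₀ → ∀ t, 0 ≤ t →
      a k t = (a 1 t) ^ (-(k : ℤ)) *
        (conj (M (k - 1)) -
          ∑ i ∈ (Fintype.piFinset fun _ : Fin k => Finset.Icc 1 n).filter
              (fun i => (∑ j, i j) ≤ n ∧ k + 1 ≤ ∑ j, i j ∧ ¬ ∀ j, i j = 1),
            (i ⟨0, by omega⟩ : ℂ) * conj (∏ j, a (i j) t) * a (∑ j, i j) t))
    (hbd2 : ∃ B : ℝ, ∀ j, n₀ + 1 ≤ j → j ≤ n → ∀ t, 0 ≤ t →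
      ‖a 1 t ^ (n₀ + 1) * a j t‖ ≤ B) :
    ∀ k, 2 ≤ k → k ≤ n₀ →
      Tendsto (fun t => a 1 t ^ (n₀ + 1) * a k t) atTop (nhds 0) := by
  obtain ⟨B, hB⟩ := hbd2
  have hCnn : (0:ℝ) ≤ C :=
    le_trans (norm_nonneg _) (hbd 2 le_rfl (by omega) 0 le_rfl)
  have hD1 : (1:ℝ) ≤ max C 1 := le_max_right _ _
  have hD0 : (0:ℝ) ≤ max C 1 := by linarith
  have hCD : C ≤ max C 1 := le_max_left _ _
  have hrpos : ∀ t, 0 ≤ t → 0 < (a 1 t).re := fun t ht => (ha1 t ht).2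
  have ha1eq : ∀ t, 0 ≤ t → a 1 t = ((a 1 t).re : ℂ) := fun t ht =>
    Complex.ext (by simp) (by simp [(ha1 t ht).1])
  have habs1 : ∀ t, 0 ≤ t → ‖a 1 t‖ = (a 1 t).re := by
    intro t ht
    conv_lhs => rw [ha1eq t ht]
    simp [Complex.norm_real, abs_of_pos (hrpos t ht)]
  have hinv : Tendsto (fun t => ((a 1 t).re)⁻¹) atTop (nhds 0) :=
    tendsto_inv_atTop_zero.comp ha1inf
  have key : ∀ k, 2 ≤ k → k ≤ n₀ →
      (∀ s, k + 1 ≤ s → s ≤ n₀ →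
        Tendsto (fun t => a 1 t ^ (n₀ + 1) * a s t) atTop (nhds 0)) →
      Tendsto (fun t => a 1 t ^ (n₀ + 1) * a k t) atTop (nhds 0) := by
    intro k hk2 hkn IH
    have hk0 : 0 < k := by omega
    set S := (Fintype.piFinset fun _ : Fin k => Finset.Icc 1 n).filter
        (fun i => (∑ j, i j) ≤ n ∧ k + 1 ≤ ∑ j, i j ∧ ¬ ∀ j, i j = 1) with hS
    have heq : ∀ t, 0 ≤ t → a 1 t ^ (n₀ + 1) * a k t =
        ∑ i ∈ S, -(a 1 t ^ (n₀ + 1 - k) *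
          ((i ⟨0, hk0⟩ : ℂ) * conj (∏ j, a (i j) t) * a (∑ j, i j) t)) := by
      intro t ht
      have hne : a 1 t ≠ 0 := fun h => by simpa [h] using (ha1 t ht).2
      have hpow : a 1 t ^ (n₀ + 1) * a 1 t ^ (-(k:ℤ)) = a 1 t ^ (n₀ + 1 - k) := by
        rw [← zpow_natCast (a 1 t) (n₀ + 1), ← zpow_natCast (a 1 t) (n₀ + 1 - k),
          ← zpow_add₀ hne]
        congr 1
        omega
      rw [hrep k hk2 hkn t ht, hMzero k hk2 hkn, map_zero, zero_sub, mul_neg, mul_neg,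
        Finset.sum_neg_distrib, ← Finset.mul_sum, ← mul_assoc, hpow]
    have heqv : (fun t => a 1 t ^ (n₀ + 1) * a k t) =ᶠ[atTop]
        (fun t => ∑ i ∈ S, -(a 1 t ^ (n₀ + 1 - k) *
          ((i ⟨0, hk0⟩ : ℂ) * conj (∏ j, a (i j) t) * a (∑ j, i j) t))) := by
      filter_upwards [eventually_ge_atTop (0:ℝ)] with t ht using heq t ht
    refine Tendsto.congr' heqv.symm ?_
    have hsum : Tendsto (fun t => ∑ i ∈ S, -(a 1 t ^ (n₀ + 1 - k) *
        ((i ⟨0, hk0⟩ : ℂ) * conj (∏ j, a (i j) t) * a (∑ j, i j) t)))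
        atTop (nhds (∑ _i ∈ S, 0)) := by
      apply tendsto_finset_sum
      intro i hi
      rw [hS, Finset.mem_filter, Fintype.mem_piFinset] at hi
      obtain ⟨hmem, hsn, hks, hnot⟩ := hi
      push_neg at hnot
      obtain ⟨j₀, hj₀⟩ := hnot
      have hc0nn : (0:ℝ) ≤ (i ⟨0, hk0⟩ : ℝ) := Nat.cast_nonneg _
      have hmk : (Finset.univ.filter (fun j : Fin k => i j = 1)).card +
          (Finset.univ.filter (fun j : Fin k => ¬ i j = 1)).card = k := by
        simpa using Finset.card_filter_add_card_filter_not
          (s := (Finset.univ : Finset (Fin k))) (p := fun j => i j = 1)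
      have hk'1 : 1 ≤ (Finset.univ.filter (fun j : Fin k => ¬ i j = 1)).card := by
        refine Finset.card_pos.mpr ⟨j₀, ?_⟩
        simp [hj₀]
      set m := (Finset.univ.filter (fun j : Fin k => i j = 1)).card with hm
      set k' := (Finset.univ.filter (fun j : Fin k => ¬ i j = 1)).card with hk'
      have hA : Tendsto (fun t => (a 1 t).re ^ (n₀+1) * ‖a (∑ j, i j) t‖
          / (a 1 t).re) atTop (nhds 0) := by
        rcases le_or_gt (∑ j, i j) n₀ with hcase | hcase
        · have h2 := (IH (∑ j, i j) hks hcase).norm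
          rw [norm_zero] at h2
          have h1 : Tendsto (fun t => (a 1 t).re ^ (n₀+1) *
              ‖a (∑ j, i j) t‖) atTop (nhds 0) := by
            refine Tendsto.congr' ?_ h2
            filter_upwards [eventually_ge_atTop (0:ℝ)] with t ht
            simp [norm_mul, norm_pow, habs1 t ht]
          simpa [div_eq_mul_inv] using h1.mul hinv
        · have hbound : ∀ t, 0 ≤ t →
              (a 1 t).re ^ (n₀+1) * ‖a (∑ j, i j) t‖ ≤ B := by
            intro t ht
            have := hB (∑ j, i j) (by omega) hsn t ht
            rwa [norm_mul, norm_pow, habs1 t ht] at this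
          have hg : Tendsto (fun t => B * ((a 1 t).re)⁻¹) atTop (nhds 0) := by
            simpa using hinv.const_mul B
          refine squeeze_zero' ?_ ?_ hg
          · filter_upwards [eventually_ge_atTop (0:ℝ)] with t ht
            exact div_nonneg (mul_nonneg (pow_nonneg (hrpos t ht).le _)
              (norm_nonneg _)) (hrpos t ht).le
          · filter_upwards [eventually_ge_atTop (0:ℝ)] with t ht
            rw [div_eq_mul_inv]
            exact mul_le_mul_of_nonneg_right (hbound t ht)
              (inv_nonneg.2 (hrpos t ht).le)
      have hu : Tendsto (fun t => (i ⟨0, hk0⟩ : ℝ) * (max C 1) ^ k *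
          ((a 1 t).re ^ (n₀+1) * ‖a (∑ j, i j) t‖ / (a 1 t).re))
          atTop (nhds 0) := by
        simpa using hA.const_mul ((i ⟨0, hk0⟩ : ℝ) * (max C 1) ^ k)
      have hX : Tendsto (fun t => a 1 t ^ (n₀ + 1 - k) *
          ((i ⟨0, hk0⟩ : ℂ) * conj (∏ j, a (i j) t) * a (∑ j, i j) t))
          atTop (nhds 0) := by
        rw [tendsto_zero_iff_norm_tendsto_zero]
        refine squeeze_zero' (Eventually.of_forall fun t => norm_nonneg _) ?_ hu
        filter_upwards [eventually_ge_atTop (0:ℝ), ha1inf.eventually_ge_atTop 1]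
          with t ht hr1
        have hr0 : 0 < (a 1 t).re := hrpos t ht
        have hAnn : 0 ≤ ‖a (∑ j, i j) t‖ := norm_nonneg _
        have h1 : ∏ j ∈ Finset.univ.filter (fun j : Fin k => i j = 1),
            ‖a (i j) t‖ = (a 1 t).re ^ m := by
          have hc : ∀ j ∈ Finset.univ.filter (fun j : Fin k => i j = 1),
              ‖a (i j) t‖ = (a 1 t).re := fun j hj => by
            rw [(Finset.mem_filter.1 hj).2]; exact habs1 t ht
          rw [Finset.prod_congr rfl hc, Finset.prod_const]
        have h2 : ∏ j ∈ Finset.univ.filter (fun j : Fin k => ¬ i j = 1),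
            ‖a (i j) t‖ ≤ (max C 1) ^ k' := by
          have hle : ∀ j ∈ Finset.univ.filter (fun j : Fin k => ¬ i j = 1),
              ‖a (i j) t‖ ≤ max C 1 := by
            intro j hj
            have hj' := (Finset.mem_filter.1 hj).2
            have hij := hmem j
            rw [Finset.mem_Icc] at hij
            exact le_trans (hbd (i j) (by omega) hij.2 t ht) hCD
          calc ∏ j ∈ Finset.univ.filter (fun j : Fin k => ¬ i j = 1),
                ‖a (i j) t‖
              ≤ ∏ _j ∈ Finset.univ.filter (fun j : Fin k => ¬ i j = 1), max C 1 :=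
                Finset.prod_le_prod (fun j _ => norm_nonneg _) hle
            _ = (max C 1) ^ k' := by rw [Finset.prod_const]
        have hprod : ∏ j, ‖a (i j) t‖ ≤ (a 1 t).re ^ m * (max C 1) ^ k' := by
          rw [← Finset.prod_filter_mul_prod_filter_not Finset.univ
            (fun j : Fin k => i j = 1) (fun j => ‖a (i j) t‖)]
          refine mul_le_mul (le_of_eq h1) h2
            (Finset.prod_nonneg fun j _ => norm_nonneg _)
            (pow_nonneg hr0.le _)
        have hnorm : ‖a 1 t ^ (n₀ + 1 - k) *
            ((i ⟨0, hk0⟩ : ℂ) * conj (∏ j, a (i j) t) * a (∑ j, i j) t)‖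
            = (a 1 t).re ^ (n₀ + 1 - k) * ((i ⟨0, hk0⟩ : ℝ) *
              (∏ j, ‖a (i j) t‖) * ‖a (∑ j, i j) t‖) := by
          simp [norm_mul, norm_pow, habs1 t ht,
            norm_prod, Complex.norm_natCast]
        rw [hnorm]
        calc (a 1 t).re ^ (n₀+1-k) * ((i ⟨0, hk0⟩ : ℝ) *
              (∏ j, ‖a (i j) t‖) * ‖a (∑ j, i j) t‖)
            ≤ (a 1 t).re ^ (n₀+1-k) * ((i ⟨0, hk0⟩ : ℝ) *
              ((a 1 t).re ^ m * (max C 1) ^ k') * ‖a (∑ j, i j) t‖) :=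
              mul_le_mul_of_nonneg_left (mul_le_mul_of_nonneg_right
                (mul_le_mul_of_nonneg_left hprod hc0nn) hAnn) (pow_nonneg hr0.le _)
          _ = (i ⟨0, hk0⟩ : ℝ) * ((max C 1) ^ k' *
              ((a 1 t).re ^ (n₀+1-k+m) * ‖a (∑ j, i j) t‖)) := by
              rw [pow_add]; ring
          _ ≤ (i ⟨0, hk0⟩ : ℝ) * ((max C 1) ^ k *
              ((a 1 t).re ^ n₀ * ‖a (∑ j, i j) t‖)) := by
              refine mul_le_mul_of_nonneg_left (mul_le_mul
                (pow_le_pow_right₀ hD1 (by omega))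
                (mul_le_mul_of_nonneg_right (pow_le_pow_right₀ hr1 (by omega)) hAnn)
                (mul_nonneg (pow_nonneg hr0.le _) hAnn) (pow_nonneg hD0 _)) hc0nn
          _ = (i ⟨0, hk0⟩ : ℝ) * (max C 1) ^ k *
              ((a 1 t).re ^ (n₀+1) * ‖a (∑ j, i j) t‖ / (a 1 t).re) := by
              rw [pow_succ]
              field_simp
      simpa using hX.neg
    simpa using hsum
  intro k hk2 hkn
  have main : ∀ m : ℕ, ∀ k, 2 ≤ k → k ≤ n₀ → n₀ - k = m →
      Tendsto (fun t => a 1 t ^ (n₀ + 1) * a k t) atTop (nhds 0) := by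
    intro m
    induction m using Nat.strong_induction_on with
    | _ m IHm =>
      intro k hk2 hkn hm
      exact key k hk2 hkn fun s hs1 hs2 =>
        IHm (n₀ - s) (by omega) s (by omega) hs2 rfl
  exact main (n₀ - k) k hk2 hkn rfl
end

section
/- Let n ≥ 2, and let a₁,...,aₙ : [0,∞) → ℂ with a₁ real positive, a₁(t)/√(2t) → 1, and constants C₀ ∈ ℝ, C₁,...,C_{n-1} ∈ ℂ with C_k = ∑_{j=1}^{n-k} j·a_j(t)·conj(a_{j+k}(t)) for all t and 1 ≤ k ≤ n−1, and ∑_{j=1}^{n} j·|a_j(t)|² = C₀ + 2t. Suppose additionally lim_{t→∞} conj(a_k(t))·a₁(t) = C_{k-1} for 2 ≤ k ≤ n. Then lim_{t→∞} [a₁(t) − √(2t + C₀)]·(√(2t))³ = −(1/2)·∑_{k=2}^{n} k·|C_{k-1}|². -/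
open Filter Finset ComplexConjugate

theorem stmt_12 (n : ℕ) (hn : 2 ≤ n) (a : ℕ → ℝ → ℂ) (C₀ : ℝ) (C : ℕ → ℂ)
    (ha1 : ∀ t, 0 ≤ t → (a 1 t).im = 0 ∧ 0 < (a 1 t).re)
    (hratio : Tendsto (fun t => (a 1 t).re / Real.sqrt (2 * t)) atTop (nhds 1))
    (hCk : ∀ k, 1 ≤ k → k ≤ n - 1 → ∀ t, 0 ≤ t →
      C k = ∑ j ∈ Finset.Icc 1 (n - k), (j : ℂ) * a j t * conj (a (j + k) t))
    (hC0 : ∀ t, 0 ≤ t →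
      ∑ j ∈ Finset.Icc 1 n, (j : ℝ) * ‖a j t‖ ^ 2 = C₀ + 2 * t)
    (hlim : ∀ k, 2 ≤ k → k ≤ n →
      Tendsto (fun t => conj (a k t) * a 1 t) atTop (nhds (C (k - 1)))) :
    Tendsto (fun t => ((a 1 t).re - Real.sqrt (2 * t + C₀)) * Real.sqrt (2 * t) ^ 3)
      atTop
      (nhds (-(1 / 2) * ∑ k ∈ Finset.Icc 2 n, (k : ℝ) * ‖C (k - 1)‖ ^ 2)) := by
  set r : ℝ → ℝ := fun t => (a 1 t).re with hrdef
  set S : ℝ → ℝ := fun t => ∑ j ∈ Finset.Icc 2 n, (j : ℝ) * ‖a j t‖ ^ 2 with hSdef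
  set L : ℝ := ∑ k ∈ Finset.Icc 2 n, (k : ℝ) * ‖C (k - 1)‖ ^ 2 with hLdef
  -- |a 1 t| = r t for t ≥ 0
  have habs1 : ∀ t, 0 ≤ t → ‖a 1 t‖ = r t := by
    intro t ht
    obtain ⟨him, hre⟩ := ha1 t ht
    have : a 1 t = ((r t : ℝ) : ℂ) := Complex.ext (by simp [hrdef]) (by simp [him])
    rw [this, Complex.norm_real, Real.norm_eq_abs, abs_of_pos hre]
  -- r t ^ 2 + S t = C₀ + 2 t
  have hsplit : ∀ t, 0 ≤ t → r t ^ 2 + S t = C₀ + 2 * t := by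
    intro t ht
    have h := hC0 t ht
    rw [show Finset.Icc 1 n = insert 1 (Finset.Icc 2 n) from by
        ext x; simp only [Finset.mem_insert, Finset.mem_Icc]; omega,
      Finset.sum_insert (by simp)] at h
    rw [habs1 t ht] at h
    simpa using h
  have hSnn : ∀ t, 0 ≤ S t := by
    intro t
    apply Finset.sum_nonneg
    intro j hj
    positivity
  -- S t * r t ^ 2 → L
  have hterm : ∀ k ∈ Finset.Icc 2 n,
      Tendsto (fun t => (k : ℝ) * ‖a k t‖ ^ 2 * r t ^ 2) atTop
        (nhds ((k : ℝ) * ‖C (k - 1)‖ ^ 2)) := by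
    intro k hk
    simp only [Finset.mem_Icc] at hk
    have h1 := hlim k hk.1 hk.2
    have h2 : Tendsto (fun t => (k : ℝ) * ‖conj (a k t) * a 1 t‖ ^ 2) atTop
        (nhds ((k : ℝ) * ‖C (k - 1)‖ ^ 2)) :=
      (((continuous_norm.tendsto _).comp h1).pow 2).const_mul _
    refine Tendsto.congr' ?_ h2
    filter_upwards [eventually_ge_atTop (0 : ℝ)] with t ht
    rw [norm_mul, Complex.norm_conj, habs1 t ht]
    ring
  have hSr : Tendsto (fun t => S t * r t ^ 2) atTop (nhds L) := by
    have h := tendsto_finset_sum _ hterm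
    refine h.congr fun t => ?_
    rw [hSdef]
    rw [Finset.sum_mul]
  -- √(2t)/r t → 1 and 2t/r² → 1
  have h2t : Tendsto (fun t : ℝ => 2 * t) atTop atTop :=
    Tendsto.const_mul_atTop two_pos tendsto_id
  have hsq : Tendsto (fun t => Real.sqrt (2 * t) / r t) atTop (nhds 1) := by
    have h := hratio.inv₀ one_ne_zero
    simpa [inv_div] using h
  have h2tr2 : Tendsto (fun t => 2 * t / r t ^ 2) atTop (nhds 1) := by
    have h := hsq.pow 2
    rw [one_pow] at h
    refine Tendsto.congr' ?_ h
    filter_upwards [eventually_ge_atTop (0 : ℝ)] with t ht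
    rw [div_pow, Real.sq_sqrt (by linarith)]
  -- S t * (2t) → L
  have hS2t : Tendsto (fun t => S t * (2 * t)) atTop (nhds L) := by
    have h := hSr.mul h2tr2
    rw [mul_one] at h
    refine Tendsto.congr' ?_ h
    filter_upwards [eventually_ge_atTop (0 : ℝ)] with t ht
    have hr : r t ≠ 0 := ne_of_gt (ha1 t ht).2
    field_simp
  -- √(2t+C₀)/√(2t) → 1
  have hfrac1 : Tendsto (fun t => Real.sqrt (2 * t + C₀) / Real.sqrt (2 * t)) atTop (nhds 1) := by
    have h0 : Tendsto (fun t : ℝ => (2 * t + C₀) / (2 * t)) atTop (nhds 1) := by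
      have h : Tendsto (fun t : ℝ => 1 + C₀ / (2 * t)) atTop (nhds (1 + 0)) :=
        tendsto_const_nhds.add (Tendsto.div_atTop tendsto_const_nhds h2t)
      rw [add_zero] at h
      refine Tendsto.congr' ?_ h
      filter_upwards [eventually_gt_atTop (0 : ℝ)] with t ht
      field_simp
    have h := (Real.continuous_sqrt.tendsto 1).comp h0
    rw [Real.sqrt_one] at h
    refine Tendsto.congr' ?_ h
    filter_upwards [eventually_ge_atTop (|C₀|)] with t ht
    have h1 : (0 : ℝ) ≤ 2 * t + C₀ := by
      have := neg_abs_le C₀; have := abs_nonneg C₀; linarith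
    simp only [Function.comp_apply]
    rw [Real.sqrt_div h1]
  -- √(2t)/(r + √(2t+C₀)) → 1/2
  have hfrac : Tendsto (fun t => Real.sqrt (2 * t) / (r t + Real.sqrt (2 * t + C₀))) atTop
      (nhds (1 / 2)) := by
    have hden : Tendsto (fun t => r t / Real.sqrt (2 * t) + Real.sqrt (2 * t + C₀) / Real.sqrt (2 * t))
        atTop (nhds 2) := by
      have h := hratio.add hfrac1
      rw [show (1 : ℝ) + 1 = 2 by norm_num] at h
      exact h
    have h := hden.inv₀ two_ne_zero
    rw [show (2 : ℝ)⁻¹ = 1 / 2 by norm_num] at h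
    refine Tendsto.congr' ?_ h
    filter_upwards [] with t
    rw [← add_div, inv_div]
  -- assemble
  have hmain : Tendsto (fun t => -(S t * (2 * t)) * (Real.sqrt (2 * t) / (r t + Real.sqrt (2 * t + C₀))))
      atTop (nhds (-(1 / 2) * L)) := by
    have h := hS2t.neg.mul hfrac
    rw [show -L * (1 / 2) = -(1 / 2) * L by ring] at h
    exact h
  refine Tendsto.congr' ?_ hmain
  filter_upwards [eventually_gt_atTop (0 : ℝ)] with t ht
  have h0 : (0 : ℝ) ≤ t := le_of_lt ht
  have hs := hsplit t h0
  have hr := (ha1 t h0).2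
  have hCt : (0 : ℝ) ≤ 2 * t + C₀ := by nlinarith [hSnn t, sq_nonneg (r t)]
  have hsq2 : Real.sqrt (2 * t + C₀) ^ 2 = 2 * t + C₀ := Real.sq_sqrt hCt
  have hD : 0 < r t + Real.sqrt (2 * t + C₀) :=
    add_pos_of_pos_of_nonneg hr (Real.sqrt_nonneg _)
  have hcube : Real.sqrt (2 * t) ^ 3 = 2 * t * Real.sqrt (2 * t) := by
    rw [pow_succ, Real.sq_sqrt (by linarith)]
  have key : r t - Real.sqrt (2 * t + C₀) = -S t / (r t + Real.sqrt (2 * t + C₀)) := by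
    rw [eq_div_iff hD.ne']
    linear_combination hs - hsq2
  rw [key, hcube]
  ring
end
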